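/- If a point i ∈ ℝ^{M-1} does not lie on the hyperplane spanned by the (projected) rows e_1,…,ê_q,…,e_M of L, then ⟨v_q, i⟩ = 1 + γ/B_q, where w_q = (B_q/γ)(v_q, 1, −1) is the q-th column of L^{-1}; consequently ⟨v_q, i⟩ > 1 if B_q > 0 and ⟨v_q, i⟩ < 1 if B_q < 0, for points i in general position relative to that hyperplane on the appropriate side. -/

import Mathlib

open Matrix

/-!
Only the row `q` can lie off the hyperplane spanned by the other rows, so `i = q`. Row `q` of
`L` is `(p_q, 0, 1)` and column `q` of `L⁻¹` is `(B/γ)(v, 1, -1)`; their product is the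
diagonal entry `1` of `L * L⁻¹`, i.e. `(B/γ)(⟨v, p_q⟩ - 1) = 1`.
-/

theorem dotProduct_eq_one_add_inv_of_row_mul_column {K : Type*} [Field K] {n : ℕ}
    (L : Matrix (Fin (n + 2)) (Fin (n + 2)) K) (hL : IsUnit L.det) (q : Fin (n + 2))
    (c : K) (v : Fin n → K)
    (hzero : L q (Fin.last n).castSucc = 0) (hone : L q (Fin.last (n + 1)) = 1)
    (hcol : ∀ j : Fin (n + 2), L⁻¹ j q =
      c * (if h : (j : ℕ) < n then v ⟨j, h⟩ else if (j : ℕ) = n then 1 else -1)) :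
    ∑ j : Fin n, v j * L q j.castSucc.castSucc = 1 + c⁻¹ := by
  have hdiag : ∑ j, L q j * L⁻¹ j q = 1 := by
    simpa [Matrix.mul_apply] using congrFun₂ (Matrix.mul_nonsing_inv L hL) q q
  have hsplit : ∑ j, L q j * L⁻¹ j q = c * (∑ j : Fin n, v j * L q j.castSucc.castSucc - 1) := by
    simp [Fin.sum_univ_castSucc, hzero, hone, hcol, sub_eq_add_neg, mul_add, Finset.mul_sum,
      mul_comm, mul_left_comm]
  rw [hsplit] at hdiag
  rw [← eq_inv_of_mul_eq_one_right hdiag]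
  ring

/-- Computation in the proof of Corollary 3.2, 1): with `w_q = (B_q/γ)(v_q,1,−1)`
the `q`-th column of `L⁻¹`, any (projected) vertex `J = e_i'` (`i ≤ M`) not
lying on the hyperplane spanned by the projected rows `e_1,…,ê_q,…,e_M`
satisfies `⟨v_q, J⟩ = 1 + γ/B_q`; consequently `⟨v_q, J⟩ > 1` if `B_q > 0`
and `⟨v_q, J⟩ < 1` if `B_q < 0`. -/
theorem stmt_6 (M : ℕ)
    (L : Matrix (Fin (M + 1)) (Fin (M + 1)) ℚ)
    (γ : ℚ) (hγ : L.det = γ) (hγpos : 0 < γ)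
    (hu : ∀ i : Fin (M + 1), (i : ℕ) < M → L i ⟨M - 1, by omega⟩ = 0)
    (hone : ∀ i : Fin (M + 1), (i : ℕ) < M → L i (Fin.last M) = 1)
    (p : Fin (M + 1) → (Fin (M - 1) → ℚ))
    (hp : ∀ i j, p i j = L i (Fin.castLE (by omega) j))
    (q : Fin (M + 1)) (B : ℚ) (v : Fin (M - 1) → ℚ)
    (hw : ∀ j : Fin (M + 1), L⁻¹ j q = (B / γ) *
        (if h : (j : ℕ) < M - 1 then v ⟨j, h⟩
         else if (j : ℕ) = M - 1 then 1 else -1))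
    (i : Fin (M + 1)) (hi : (i : ℕ) < M)
    (hoff : p i ∉ affineSpan ℚ (p '' {j | j ≠ q ∧ (j : ℕ) < M})) :
    (∑ jj : Fin (M - 1), v jj * p i jj = 1 + γ / B) ∧
    (0 < B → 1 < ∑ jj : Fin (M - 1), v jj * p i jj) ∧
    (B < 0 → ∑ jj : Fin (M - 1), v jj * p i jj < 1) := by
  obtain rfl : i = q := by
    by_contra hne
    exact hoff (subset_affineSpan ℚ _ ⟨i, ⟨hne, hi⟩, rfl⟩)
  obtain ⟨n, rfl⟩ : ∃ n, M = n + 1 := ⟨M - 1, by omega⟩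
  have hL : IsUnit L.det := by rw [hγ]; exact hγpos.ne'.isUnit
  have hsum : ∑ jj, v jj * p i jj = 1 + γ / B := by
    simp only [hp]
    rw [← inv_div]
    exact dotProduct_eq_one_add_inv_of_row_mul_column L hL i (B / γ) v (hu i hi) (hone i hi) hw
  refine ⟨hsum, fun hB => ?_, fun hB => ?_⟩
  · linarith [div_pos hγpos hB]
  · linarith [div_neg_of_pos_of_neg hγpos hB]
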